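/- Let p, q, r > 1 satisfy 1/p + 1/q = 1 + 1/r, and let α, β > 0. Then ( ∫_ℝ ( (M_α)^{1/p} * (M_β)^{1/q} )(x)^r dx )^{1/r} = [ (pα/α^{1/p}) · (qβ/β^{1/q}) · (pα + qβ)^{1/r} / ( r^{1/r} (pα + qβ) ) ]^{1/2}. -/

import Mathlib

/-!
A power of a Gaussian is again a Gaussian up to a constant, `M_s ^ c = C(s, c) • M_{s/c}`, and
Gaussians form a convolution semigroup, `M_s * M_t = M_{s+t}`. Hence
`M_α^{1/p} * M_β^{1/q} = C(α, 1/p) C(β, 1/q) • M_{pα+qβ}`, whose `r`-th power integrates to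
`(C(α, 1/p) C(β, 1/q))^r C(pα+qβ, r)`. In the resulting constant the powers of `2π` cancel
exactly because `1/p + 1/q = 1 + 1/r`.
-/

open MeasureTheory Real

/-- Convolution on `ℝ`. -/
noncomputable def conv (f g : ℝ → ℝ) : ℝ → ℝ := fun x => ∫ y, f (x - y) * g y

/-- The centered Gaussian density on `ℝ` with variance `s`. -/
noncomputable def gauss (s : ℝ) : ℝ → ℝ :=
  fun x => (2 * Real.pi * s) ^ (-(1:ℝ)/2) * Real.exp (-x ^ 2 / (2 * s))

open ProbabilityTheory

lemma conv_const_mul_const_mul (a b : ℝ) (f g : ℝ → ℝ) :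
    conv (fun y => a * f y) (fun y => b * g y) = fun x => a * b * conv f g x := by
  ext x
  simp only [conv, mul_mul_mul_comm, integral_const_mul]

lemma gauss_eq_gaussianPDFReal {s : ℝ} (hs : 0 ≤ s) : gauss s = gaussianPDFReal 0 s.toNNReal := by
  ext x
  rw [gauss, gaussianPDFReal, Real.coe_toNNReal _ hs, sub_zero, Real.sqrt_eq_rpow,
    ← Real.rpow_neg (by positivity)]
  norm_num

lemma gauss_pos {s : ℝ} (hs : 0 < s) (x : ℝ) : 0 < gauss s x := by
  rw [gauss_eq_gaussianPDFReal hs.le]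
  exact gaussianPDFReal_pos _ _ _ (by simpa using hs)

lemma integral_gauss {s : ℝ} (hs : 0 < s) : ∫ x, gauss s x = 1 := by
  rw [gauss_eq_gaussianPDFReal hs.le]
  exact integral_gaussianPDFReal_eq_one _ (by simpa using hs)

/-- Completing the square in `y`. -/
lemma gauss_sub_mul_gauss {s t : ℝ} (hs : 0 < s) (ht : 0 < t) (x y : ℝ) :
    gauss s (x - y) * gauss t y =
      gauss (s + t) x * gauss (s * t / (s + t)) (y - t * x / (s + t)) := by
  have hst : 0 < s + t := by positivity
  simp only [gauss]
  rw [mul_mul_mul_comm, mul_mul_mul_comm ((2 * π * (s + t)) ^ _),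
    ← Real.mul_rpow (by positivity) (by positivity),
    ← Real.mul_rpow (by positivity) (by positivity), ← Real.exp_add, ← Real.exp_add]
  congr 2
  · field_simp
  · field_simp
    ring

lemma conv_gauss_gauss {s t : ℝ} (hs : 0 < s) (ht : 0 < t) :
    conv (gauss s) (gauss t) = gauss (s + t) := by
  ext x
  simp only [conv, gauss_sub_mul_gauss hs ht, integral_const_mul]
  rw [integral_sub_right_eq_self (gauss _), integral_gauss (by positivity), mul_one]

noncomputable def gaussRpowConst (s c : ℝ) : ℝ := (2 * π * s) ^ ((1 - c) / 2) * c ^ (-(1:ℝ)/2)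

lemma gaussRpowConst_pos {s c : ℝ} (hs : 0 < s) (hc : 0 < c) : 0 < gaussRpowConst s c := by
  unfold gaussRpowConst
  positivity

lemma gauss_rpow {s c : ℝ} (hs : 0 < s) (hc : 0 < c) (x : ℝ) :
    gauss s x ^ c = gaussRpowConst s c * gauss (s / c) x := by
  have h2 : 0 < 2 * π * s := by positivity
  simp only [gauss, gaussRpowConst]
  rw [Real.mul_rpow (by positivity) (Real.exp_nonneg _), ← Real.rpow_mul h2.le, ← Real.exp_mul,
    show 2 * π * (s / c) = 2 * π * s * c⁻¹ by ring, Real.mul_rpow h2.le (by positivity),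
    Real.inv_rpow hc.le]
  field_simp
  rw [← Real.rpow_add h2]
  ring_nf

lemma integral_gauss_rpow {s r : ℝ} (hs : 0 < s) (hr : 0 < r) :
    ∫ x, gauss s x ^ r = gaussRpowConst s r := by
  simp only [gauss_rpow hs hr, integral_const_mul]
  rw [integral_gauss (div_pos hs hr), mul_one]

lemma gaussRpowConst_mul_gaussRpowConst_mul_rpow {p q r : ℝ} (hp : 0 < p) (hq : 0 < q)
    (hr : 0 < r) (hpqr : 1/p + 1/q = 1 + 1/r) {α β : ℝ} (hα : 0 < α) (hβ : 0 < β) :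
    gaussRpowConst α (1/p) * gaussRpowConst β (1/q) *
        gaussRpowConst (p * α + q * β) r ^ (1/r) =
      ((p * α / α ^ (1/p)) * (q * β / β ^ (1/q)) * (p * α + q * β) ^ (1/r) /
        (r ^ (1/r) * (p * α + q * β))) ^ ((1:ℝ)/2) := by
  have hσ : 0 < p * α + q * β := by positivity
  unfold gaussRpowConst
  apply Real.log_injOn_pos (Set.mem_Ioi.2 (by positivity)) (Set.mem_Ioi.2 (by positivity))
  simp (disch := positivity) only [Real.log_mul, Real.log_div, Real.log_rpow, Real.log_one]
  have hpqr' : q * r + p * r = p * q * r + p * q := by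
    field_simp at hpqr
    linarith
  field_simp
  linear_combination (-(Real.log 2 + Real.log π)) * hpqr'

/-- Explicit computation of the `L^r` norm of the convolution of powers of Gaussians:
`( ∫ (M_α^{1/p} * M_β^{1/q})^r )^{1/r}
  = [ (pα/α^{1/p}) (qβ/β^{1/q}) (pα+qβ)^{1/r} / ( r^{1/r} (pα+qβ) ) ]^{1/2}`. -/
theorem gaussian_conv_lr_norm (p q r : ℝ) (hp : 1 < p) (hq : 1 < q) (hr : 1 < r)
    (hpqr : 1/p + 1/q = 1 + 1/r) (α β : ℝ) (hα : 0 < α) (hβ : 0 < β) :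
    (∫ x, conv (fun y => gauss α y ^ (1/p)) (fun y => gauss β y ^ (1/q)) x ^ r) ^ (1/r) =
      ((p * α / α ^ (1/p)) * (q * β / β ^ (1/q)) * (p * α + q * β) ^ (1/r) /
        (r ^ (1/r) * (p * α + q * β))) ^ ((1:ℝ)/2) := by
  have hp0 : 0 < p := by linarith
  have hq0 : 0 < q := by linarith
  have hr0 : 0 < r := by linarith
  have hσ : 0 < p * α + q * β := by positivity
  set K := gaussRpowConst α (1/p) * gaussRpowConst β (1/q)
  have hK : 0 ≤ K :=
    (mul_pos (gaussRpowConst_pos hα (one_div_pos.2 hp0))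
      (gaussRpowConst_pos hβ (one_div_pos.2 hq0))).le
  have hconv : conv (fun y => gauss α y ^ (1/p)) (fun y => gauss β y ^ (1/q)) =
      fun x => K * gauss (p * α + q * β) x := by
    simp only [gauss_rpow hα (one_div_pos.2 hp0), gauss_rpow hβ (one_div_pos.2 hq0),
      conv_const_mul_const_mul, div_div_eq_mul_div, div_one]
    rw [conv_gauss_gauss (by positivity) (by positivity), mul_comm α, mul_comm β]
  have hpow (x : ℝ) : (K * gauss (p * α + q * β) x) ^ r = K ^ r * gauss (p * α + q * β) x ^ r :=
    Real.mul_rpow hK (gauss_pos hσ x).le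
  simp only [hconv, hpow, integral_const_mul, integral_gauss_rpow hσ hr0]
  rw [Real.mul_rpow (by positivity) (gaussRpowConst_pos hσ hr0).le, ← Real.rpow_mul hK,
    mul_one_div_cancel hr0.ne', Real.rpow_one]
  exact gaussRpowConst_mul_gaussRpowConst_mul_rpow hp0 hq0 hr0 hpqr hα hβ
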